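/- arXiv:2212.12951 — 2 statements merged into one kernel-verified Lean document; each statement's English description precedes it below -/
import Mathlib

section
/- Let x ∈ S² be a point with r(x) = x. Then there exists a continuous map σ : ℝP² → Z₀ such that σ([y]) = π(x,y) for every y ∈ S², σ is a topological embedding (a homeomorphism onto its image), and q̄ ∘ σ is the identity of ℝP²; that is, σ is a section of the bundle map q̄. -/
noncomputable section

/-- The unit 2-sphere `S²` in Euclidean `ℝ³`. -/
abbrev S2 : Type := Metric.sphere (0 : EuclideanSpace ℝ (Fin 3)) 1

/-- The reflection `r(y₁,y₂,y₃) = (y₁,y₂,−y₃)` of `ℝ³`. -/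
def rFun (y : EuclideanSpace ℝ (Fin 3)) : EuclideanSpace ℝ (Fin 3) :=
  WithLp.toLp 2 (fun i => if i = 2 then -y i else y i)

lemma rFun_norm (y : EuclideanSpace ℝ (Fin 3)) : ‖rFun y‖ = ‖y‖ := by
  simp only [EuclideanSpace.norm_eq]
  congr 1
  refine Finset.sum_congr rfl fun i _ => ?_
  by_cases h : i = 2 <;> simp [rFun, h]

/-- The reflection `r`, restricted to the unit sphere `S²`. -/
def sphereR (x : S2) : S2 :=
  ⟨rFun x.val, by
    rw [mem_sphere_zero_iff_norm, rFun_norm]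
    exact mem_sphere_zero_iff_norm.mp x.2⟩

/-- The map `τ : S² × S² → S² × S²`, `τ(x,y) = (r(x), −y)`. -/
def tau (p : S2 × S2) : S2 × S2 := (sphereR p.1, -p.2)

lemma rFun_rFun (y : EuclideanSpace ℝ (Fin 3)) : rFun (rFun y) = y := by
  ext i
  by_cases h : i = 2 <;> simp [rFun, h]

lemma tau_tau (p : S2 × S2) : tau (tau p) = p := by
  obtain ⟨x, y⟩ := p
  simp only [tau, neg_neg]
  exact Prod.ext (Subtype.ext (rFun_rFun x.val)) rfl

/-- The equivalence relation on `S² × S²` given by `p ∼ q ↔ (q = p or q = τ(p))`. -/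
def tauSetoid : Setoid (S2 × S2) where
  r p q := q = p ∨ q = tau p
  iseqv := by
    constructor
    · intro p; left; rfl
    · rintro p q (rfl | rfl)
      · left; rfl
      · right; exact (tau_tau p).symm
    · rintro p q r (rfl | rfl) (rfl | rfl)
      · left; rfl
      · right; rfl
      · right; rfl
      · left; exact tau_tau p

/-- The quotient space `Z₀ = (S² × S²)/∼`, with the quotient topology. -/
abbrev Z0 : Type := Quotient tauSetoid

/-- The quotient map `π : S² × S² → Z₀`. -/
def pi0 : S2 × S2 → Z0 := Quotient.mk tauSetoid

/-- The real projective plane `ℝP²`, the projectivization of `ℝ³`. -/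
abbrev RP2 : Type := Projectivization ℝ (EuclideanSpace ℝ (Fin 3))

/-- `ℝP²` carries the quotient topology from the subspace of nonzero vectors of `ℝ³`. -/
instance : TopologicalSpace RP2 :=
  inferInstanceAs (TopologicalSpace
    (Quotient (projectivizationSetoid ℝ (EuclideanSpace ℝ (Fin 3)))))

lemma sphere_ne_zero (y : S2) : (y : EuclideanSpace ℝ (Fin 3)) ≠ 0 := by
  intro h0
  have h := mem_sphere_zero_iff_norm.mp y.2
  rw [h0] at h
  simp at h

/-- The map `q : S² × S² → ℝP²`, `q(x,y) = [y]`. -/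
def qFun (p : S2 × S2) : RP2 := Projectivization.mk ℝ p.2.val (sphere_ne_zero p.2)

lemma qFun_tau (p : S2 × S2) : qFun (tau p) = qFun p := by
  refine (Projectivization.mk_eq_mk_iff ℝ _ _ _ _).mpr ⟨-1, ?_⟩
  show (-1 : ℝˣ) • (p.2.val) = ((tau p).2).val
  simp [tau, Units.smul_def]

/-- The descended map `q̄ : Z₀ → ℝP²`, satisfying `q̄ ∘ π = q`. -/
def qbar : Z0 → RP2 :=
  Quotient.lift qFun (by
    rintro a b (rfl | rfl)
    · rfl
    · exact (qFun_tau a).symm)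

/-!
Since `r x = x`, we have `τ (x, y) = (x, -y)`, so `y ↦ π (x, y)` is an even function on `S²` and
descends along `v ↦ v / ‖v‖` to `ℝP²`. The map `q̄` is a continuous left inverse of the result,
which is therefore a topological embedding and a section of `q̄`.
-/

section UnitSphere

open scoped LinearAlgebra.Projectivization

variable {E : Type*} [NormedAddCommGroup E] [NormedSpace ℝ E]

def toUnitSphere (v : { v : E // v ≠ 0 }) : Metric.sphere (0 : E) 1 :=
  ⟨‖(v : E)‖⁻¹ • (v : E), by
    rw [mem_sphere_zero_iff_norm, norm_smul, norm_inv, norm_norm,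
      inv_mul_cancel₀ (norm_ne_zero_iff.mpr v.2)]⟩

lemma continuous_toUnitSphere : Continuous (toUnitSphere (E := E)) :=
  ((continuous_subtype_val.norm.inv₀ fun v => norm_ne_zero_iff.mpr v.2).smul
    continuous_subtype_val).subtype_mk _

lemma toUnitSphere_coe (y : Metric.sphere (0 : E) 1) :
    toUnitSphere ⟨(y : E), ne_zero_of_mem_unit_sphere y⟩ = y :=
  Subtype.ext <| by simp [toUnitSphere, mem_sphere_zero_iff_norm.mp y.2]

lemma mk_toUnitSphere (v : { v : E // v ≠ 0 }) :
    Projectivization.mk ℝ (toUnitSphere v : E) (ne_zero_of_mem_unit_sphere _) =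
      Projectivization.mk ℝ (v : E) v.2 :=
  (Projectivization.mk_eq_mk_iff ℝ _ _ _ _).mpr
    ⟨Units.mk0 ‖(v : E)‖⁻¹ (inv_ne_zero (norm_ne_zero_iff.mpr v.2)), rfl⟩

lemma toUnitSphere_eq_or_eq_neg_of_eq_smul {a b : { v : E // v ≠ 0 }} {t : ℝ}
    (h : (a : E) = t • (b : E)) :
    toUnitSphere a = toUnitSphere b ∨ toUnitSphere a = -toUnitSphere b := by
  have ht : t ≠ 0 := by rintro rfl; exact a.2 (by simpa using h)
  have key : (toUnitSphere a : E) = (t / |t|) • (toUnitSphere b : E) := by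
    simp only [toUnitSphere, h, norm_smul, Real.norm_eq_abs, smul_smul]
    congr 1
    field_simp
  rcases abs_choice t with habs | habs
  · left
    exact Subtype.ext (by rw [key, habs, div_self ht, one_smul])
  · right
    exact Subtype.ext (by rw [key, habs, div_neg, div_self ht, coe_neg_sphere, neg_one_smul])

variable {X : Type*}

def Projectivization.liftEven (f : Metric.sphere (0 : E) 1 → X) (hf : ∀ y, f (-y) = f y) :
    ℙ ℝ E → X :=
  Projectivization.lift (f ∘ toUnitSphere) fun a b _ h => by
    rcases toUnitSphere_eq_or_eq_neg_of_eq_smul h with h' | h' <;> simp [h', hf]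

lemma Projectivization.liftEven_mk (f : Metric.sphere (0 : E) 1 → X) (hf : ∀ y, f (-y) = f y)
    (y : Metric.sphere (0 : E) 1) :
    liftEven f hf (mk ℝ (y : E) (ne_zero_of_mem_unit_sphere y)) = f y := by
  simp [liftEven, toUnitSphere_coe]

lemma Projectivization.leftInverse_liftEven {f : Metric.sphere (0 : E) 1 → X}
    (hf : ∀ y, f (-y) = f y) {g : X → ℙ ℝ E}
    (hgf : ∀ y, g (f y) = mk ℝ (y : E) (ne_zero_of_mem_unit_sphere y)) :
    Function.LeftInverse g (liftEven f hf) := by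
  refine Projectivization.ind fun v hv => ?_
  simp [liftEven, hgf, mk_toUnitSphere ⟨v, hv⟩]

end UnitSphere

lemma continuous_liftEven_RP2 {X : Type*} [TopologicalSpace X] {f : S2 → X}
    (hf : ∀ y, f (-y) = f y) (hfc : Continuous f) :
    Continuous (Projectivization.liftEven f hf : RP2 → X) :=
  (hfc.comp continuous_toUnitSphere).quotient_lift _

lemma pi0_neg {x : S2} (hx : rFun x.val = x.val) (y : S2) : pi0 (x, -y) = pi0 (x, y) :=
  Quotient.sound (Or.inr (Prod.ext (Subtype.ext hx.symm) (neg_neg y).symm))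

lemma continuous_qbar : Continuous qbar :=
  (continuous_quotient_mk'.comp
    ((continuous_subtype_val.comp continuous_snd).subtype_mk _)).quotient_lift _

/-- every fixed point `x` of `r` on `S²` determines a continuous section
`σ : ℝP² → Z₀` of `q̄` with `σ([y]) = π(x,y)`, which is a topological embedding. -/
theorem section_from_fixed_point (x : S2) (hx : rFun x.val = x.val) :
    ∃ σ : RP2 → Z0,
      Continuous σ ∧
      (∀ y : S2, σ (Projectivization.mk ℝ y.val (sphere_ne_zero y)) = pi0 (x, y)) ∧
      Topology.IsEmbedding σ ∧
      qbar ∘ σ = id := by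
  let σ : RP2 → Z0 := Projectivization.liftEven (fun y => pi0 (x, y)) (pi0_neg hx)
  have hσ : Continuous σ := continuous_liftEven_RP2 _ <|
    continuous_quotient_mk'.comp (continuous_const.prodMk continuous_id)
  have hqσ : Function.LeftInverse qbar σ :=
    Projectivization.leftInverse_liftEven _ fun _ => rfl
  exact ⟨σ, hσ, Projectivization.liftEven_mk _ _, hqσ.isEmbedding continuous_qbar hσ,
    hqσ.comp_eq_id⟩
end
end

section
/- Every point of Z₀ has an open neighborhood that is homeomorphic to an open subset of Euclidean ℝ⁴ (EuclideanSpace ℝ (Fin 4)); together with Z₀ being compact, Hausdorff, and second countable, Z₀ is a closed topological 4-manifold. -/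
noncomputable section

/-! `τ` is a continuous fixed-point-free involution of the compact, Hausdorff, second countable
4-manifold `S² × S²`. The quotient map `π` is open, since
`π⁻¹(π U) = U ∪ τ⁻¹ U`; the graph of `∼` is the closed set `Δ ∪ graph τ`, so `Z₀` is Hausdorff;
and `π` is injective on `A ∩ τ⁻¹ B` whenever `A ∋ p` and `B ∋ τ p` are disjoint, so `π` is a local
homeomorphism. Charts of `Z₀` are then stereographic charts of `S² × S²` pushed forward along
`π`, composed with `ℝ² × ℝ² ≃ ℝ⁴`. -/

section InvolutionQuotient

variable {X : Type*} [TopologicalSpace X] {s : Setoid X} {σ : X → X}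

lemma isOpenQuotientMap_quotient_mk_of_rel_iff (hσ : Continuous σ)
    (hs : ∀ p q, s.r p q ↔ q = p ∨ q = σ p) : IsOpenQuotientMap (Quotient.mk s) := by
  refine ⟨Quotient.mk_surjective, continuous_quotient_mk', fun U hU => ?_⟩
  have hpre : Quotient.mk s ⁻¹' (Quotient.mk s '' U) = U ∪ σ ⁻¹' U := by
    ext p
    simp only [Set.mem_preimage, Set.mem_image, Quotient.eq, Set.mem_union]
    constructor
    · rintro ⟨u, hu, hup⟩
      rcases (hs p u).mp (s.symm hup) with rfl | rfl
      exacts [Or.inl hu, Or.inr hu]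
    · rintro (hp | hp)
      exacts [⟨p, hp, s.refl p⟩, ⟨σ p, hp, s.symm ((hs p _).mpr (Or.inr rfl))⟩]
  rw [← isQuotientMap_quotient_mk'.isOpen_preimage]
  exact hpre ▸ hU.union (hU.preimage hσ)

lemma t2Space_quotient_of_rel_iff [T2Space X] (hσ : Continuous σ)
    (hs : ∀ p q, s.r p q ↔ q = p ∨ q = σ p) : T2Space (Quotient s) := by
  rw [t2Space_iff_of_isOpenQuotientMap (isOpenQuotientMap_quotient_mk_of_rel_iff hσ hs)]
  have hgraph : {q : X × X | Quotient.mk s q.1 = Quotient.mk s q.2} =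
      {q | q.2 = q.1} ∪ {q | q.2 = σ q.1} := by
    ext q
    exact Quotient.eq.trans (hs q.1 q.2)
  rw [hgraph]
  exact (isClosed_eq continuous_snd continuous_fst).union
    (isClosed_eq continuous_snd (hσ.comp continuous_fst))

lemma isLocalHomeomorph_quotient_mk_of_rel_iff [T2Space X] (hσ : Continuous σ)
    (hfree : ∀ x, σ x ≠ x) (hs : ∀ p q, s.r p q ↔ q = p ∨ q = σ p) :
    IsLocalHomeomorph (Quotient.mk s) := by
  refine isLocalHomeomorph_iff_isOpenEmbedding_restrict.mpr fun x => ?_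
  obtain ⟨A, B, hA, hB, hxA, hσxB, hAB⟩ := t2_separation (hfree x).symm
  set U := A ∩ σ ⁻¹' B
  have hU : IsOpen U := hA.inter (hB.preimage hσ)
  -- `σ` maps `U` into `B`, which is disjoint from `U ⊆ A`
  have hinj : Function.Injective (U.domRestrict (Quotient.mk s)) := by
    rintro ⟨u, huA, huB⟩ ⟨v, hvA, hvB⟩ huv
    rcases (hs u v).mp (Quotient.exact huv) with rfl | rfl
    · rfl
    · exact absurd huB (Set.disjoint_left.mp hAB hvA)
  refine ⟨U, hU.mem_nhds ⟨hxA, hσxB⟩, .of_continuous_injective_isOpenMap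
    (continuous_quotient_mk'.comp continuous_subtype_val) hinj ?_⟩
  exact (isOpenQuotientMap_quotient_mk_of_rel_iff hσ hs).isOpenMap.comp hU.isOpenMap_subtype_val

end InvolutionQuotient

lemma IsLocalHomeomorph.exists_openPartialHomeomorph_mem_source {X Y H : Type*}
    [TopologicalSpace X] [TopologicalSpace Y] [TopologicalSpace H] [ChartedSpace H X]
    {f : X → Y} (hf : IsLocalHomeomorph f) (x : X) :
    ∃ e : OpenPartialHomeomorph Y H, f x ∈ e.source := by
  obtain ⟨e, hxe, rfl⟩ := hf x
  refine ⟨e.symm.trans (chartAt H x), e.map_source hxe, ?_⟩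
  simp [e.left_inv hxe]

@[fun_prop]
lemma continuous_rFun : Continuous rFun :=
  (PiLp.continuous_toLp 2 _).comp (continuous_pi fun i => by split_ifs <;> fun_prop)

lemma continuous_tau : Continuous tau := by
  unfold tau sphereR
  fun_prop

lemma tau_ne_self (p : S2 × S2) : tau p ≠ p := fun h =>
  ne_neg_of_mem_unit_sphere ℝ p.2 (congrArg Prod.snd h).symm

lemma tauSetoid_r_iff (p q : S2 × S2) : tauSetoid.r p q ↔ q = p ∨ q = tau p :=
  Iff.rfl

/-- every point of `Z₀` has an open neighborhood homeomorphic to an open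
subset of Euclidean `ℝ⁴`; together with `Z₀` being compact, Hausdorff, and second
countable, `Z₀` is a closed topological 4-manifold. -/
theorem Z0_is_closed_topological_four_manifold :
    (∀ z : Z0, ∃ U : Set Z0, z ∈ U ∧ IsOpen U ∧
        ∃ V : Set (EuclideanSpace ℝ (Fin 4)), IsOpen V ∧ Nonempty (↥U ≃ₜ ↥V)) ∧
    CompactSpace Z0 ∧ T2Space Z0 ∧ SecondCountableTopology Z0 := by
  refine ⟨fun z => ?_, inferInstance, t2Space_quotient_of_rel_iff continuous_tau tauSetoid_r_iff,
    TopologicalSpace.Quotient.secondCountableTopology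
      (isOpenQuotientMap_quotient_mk_of_rel_iff continuous_tau tauSetoid_r_iff).isOpenMap⟩
  obtain ⟨p, rfl⟩ := Quotient.mk_surjective z
  obtain ⟨e, hpe⟩ := (isLocalHomeomorph_quotient_mk_of_rel_iff continuous_tau tau_ne_self
    tauSetoid_r_iff).exists_openPartialHomeomorph_mem_source
    (H := ModelProd (EuclideanSpace ℝ (Fin 2)) (EuclideanSpace ℝ (Fin 2))) p
  let c := e.transHomeomorph (EuclideanSpace.finAddEquivProd (n := 2) (m := 2)).toHomeomorph.symm
  exact ⟨c.source, hpe, c.open_source, c.target, c.open_target, ⟨c.toHomeomorphSourceTarget⟩⟩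
end
end
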